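/- arXiv:2302.02264 — 7 statements merged into one kernel-verified Lean document; each statement's English description precedes it below -/
import Mathlib

section
/- Let (X, τ, d) be a locally compact Hausdorff space with a [0,1]-valued open metric d, and let X* = X ∪ {∞} be its one-point compactification with the metric extended by d(∞, x) = 1 for all x ∈ X. Then the extended metric d* is open on X*. -/
open Set

/-- The open `r`-neighborhood of a set with respect to a distance function `d`. -/
def nbhd {X : Type*} (d : X → X → ℝ) (A : Set X) (r : ℝ) : Set X :=
  {x | ∃ a ∈ A, d x a < r}

/-- A closed set is definable if it is contained in the interior of each of its
open `r`-neighborhoods. -/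
def IsDefinable {X : Type*} [TopologicalSpace X] (d : X → X → ℝ) (D : Set X) : Prop :=
  IsClosed D ∧ ∀ r > 0, D ⊆ interior (nbhd d D r)

/-- A metric is open if `U^{<r}` is open for every open `U` and every `r > 0`. -/
def IsOpenMetric {X : Type*} [TopologicalSpace X] (d : X → X → ℝ) : Prop :=
  ∀ U : Set X, IsOpen U → ∀ r > 0, IsOpen (nbhd d U r)

/-- `d` is a metric on the underlying set. -/
def IsMetric {X : Type*} (d : X → X → ℝ) : Prop :=
  (∀ x y, d x y = 0 ↔ x = y) ∧ (∀ x y, d x y = d y x) ∧ ∀ x y z, d x z ≤ d x y + d y z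

/-- `d` is a `[0,1]`-valued metric on the underlying set. -/
def BddMetric {X : Type*} (d : X → X → ℝ) : Prop :=
  IsMetric d ∧ ∀ x y, 0 ≤ d x y ∧ d x y ≤ 1
/-- If `X` is locally compact Hausdorff with an open `[0,1]`-valued metric `d`, then the
crisp extension of `d` to the one-point compactification `X*` is open. -/
theorem stmt_5 {X : Type*} [TopologicalSpace X] [T2Space X] [LocallyCompactSpace X]
    (d : X → X → ℝ) (hd : BddMetric d) (hopen : IsOpenMetric d)
    (dS : OnePoint X → OnePoint X → ℝ)
    (hdS : ∀ x y : X, dS (x : OnePoint X) (y : OnePoint X) = d x y)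
    (hinf : ∀ x : X, dS OnePoint.infty (x : OnePoint X) = 1 ∧
      dS (x : OnePoint X) OnePoint.infty = 1)
    (hself : dS OnePoint.infty OnePoint.infty = 0) :
    IsOpenMetric dS := by
  intro U hU r hr
  rcases le_or_gt r 1 with h1 | h1
  · have key : ((↑) ⁻¹' nbhd dS U r : Set X) = nbhd d ((↑) ⁻¹' U) r := by
      ext x
      constructor
      · rintro ⟨a, ha, hax⟩
        cases a with
        | infty => exact absurd hax (by rw [(hinf x).2]; linarith)
        | coe a => exact ⟨a, ha, by rwa [hdS] at hax⟩
      · rintro ⟨a, ha, hax⟩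
        exact ⟨(a : OnePoint X), ha, by rwa [hdS]⟩
    have hU0 : IsOpen ((↑) ⁻¹' U : Set X) := hU.preimage OnePoint.continuous_coe
    have hN : IsOpen (nbhd d ((↑) ⁻¹' U) r) := hopen _ hU0 r hr
    rw [OnePoint.isOpen_def]
    refine ⟨?_, by rw [key]; exact hN⟩
    rintro ⟨a, haU, hlt⟩
    have hainf : a = OnePoint.infty := by
      cases a with
      | infty => rfl
      | coe a => exact absurd hlt (by rw [(hinf a).1]; linarith)
    have hK : IsCompact ((↑) ⁻¹' U : Set X)ᶜ :=
      (OnePoint.isOpen_def.mp hU).1 (hainf ▸ haU)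
    rw [key]
    refine hK.of_isClosed_subset hN.isClosed_compl (compl_subset_compl.mpr ?_)
    intro x hx
    exact ⟨x, hx, by rw [(hd.1.1 x x).mpr rfl]; exact hr⟩
  · rcases U.eq_empty_or_nonempty with hE | ⟨a, ha⟩
    · have : nbhd dS U r = ∅ := by simp [nbhd, hE]
      rw [this]; exact isOpen_empty
    · have : nbhd dS U r = univ := by
        ext z
        simp only [nbhd, mem_setOf_eq, mem_univ, iff_true]
        refine ⟨a, ha, ?_⟩
        cases z with
        | infty =>
          cases a with
          | infty => rw [hself]; linarith
          | coe a => rw [(hinf a).1]; exact h1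
        | coe z =>
          cases a with
          | infty => rw [(hinf z).2]; exact h1
          | coe a =>
            rw [hdS]
            exact lt_of_le_of_lt (hd.2 z a).2 h1
      rw [this]; exact isOpen_univ
end

section
/- Let (X, τ, d) be a Hausdorff space with a [0,1]-valued metric and let X* = X ∪ {∞} be its one-point compactification with d(∞,x) = 1 for all x ∈ X. Suppose D ⊆ X is closed in X, D ∩ X is definable in X, and for every r > 0 the set X \ int_τ(D^{<r}) is compact. Then D ∪ {∞} is definable in X*. -/
open Set

/-- If `D ⊆ X` is closed and definable in `X` and `X \ int(D^{<r})` is compact for every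
`r > 0`, then `D ∪ {∞}` is definable in the one-point compactification `X*`. -/
theorem stmt_7 {X : Type*} [TopologicalSpace X] [T2Space X]
    (d : X → X → ℝ) (hd : BddMetric d)
    (dS : OnePoint X → OnePoint X → ℝ)
    (hdS : ∀ x y : X, dS (x : OnePoint X) (y : OnePoint X) = d x y)
    (hinf : ∀ x : X, dS OnePoint.infty (x : OnePoint X) = 1 ∧
      dS (x : OnePoint X) OnePoint.infty = 1)
    (hself : dS OnePoint.infty OnePoint.infty = 0)
    (D : Set X) (hDcl : IsClosed D) (hDdef : IsDefinable d D)
    (hco : ∀ r > 0, IsCompact ((interior (nbhd d D r))ᶜ)) :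
    IsDefinable dS ((fun x : X => (x : OnePoint X)) '' D ∪ {OnePoint.infty}) := by
  set E : Set (OnePoint X) := (fun x : X => (x : OnePoint X)) '' D ∪ {OnePoint.infty} with hE
  have hinfE : OnePoint.infty ∈ E := Or.inr rfl
  constructor
  · rw [OnePoint.isClosed_iff_of_mem hinfE]
    have : ((↑) : X → OnePoint X) ⁻¹' E = D := by
      ext x
      simp [hE, Set.mem_image, OnePoint.coe_eq_coe, OnePoint.coe_ne_infty]
    rw [this]; exact hDcl
  · intro r hr
    set V : Set X := interior (nbhd d D r) with hV
    set W : Set (OnePoint X) := (fun x : X => (x : OnePoint X)) '' V ∪ {OnePoint.infty} with hW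
    have hpre : ((↑) : X → OnePoint X) ⁻¹' W = V := by
      ext x
      simp [hW, Set.mem_image, OnePoint.coe_eq_coe, OnePoint.coe_ne_infty]
    have hWopen : IsOpen W := by
      rw [OnePoint.isOpen_iff_of_mem (Or.inr rfl), hpre]
      exact ⟨isClosed_compl_iff.mpr isOpen_interior, hco r hr⟩
    have hEW : E ⊆ W := by
      rintro z (⟨x, hx, rfl⟩ | hz)
      · exact Or.inl ⟨x, hDdef.2 r hr hx, rfl⟩
      · exact Or.inr hz
    have hWnbhd : W ⊆ nbhd dS E r := by
      rintro z (⟨x, hx, rfl⟩ | hz)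
      · obtain ⟨a, ha, hda⟩ := interior_subset hx
        exact ⟨(a : OnePoint X), Or.inl ⟨a, ha, rfl⟩, by rwa [hdS]⟩
      · rcases hz with rfl
        exact ⟨OnePoint.infty, Or.inr rfl, by rw [hself]; exact hr⟩
    exact fun z hz => interior_maximal hWnbhd hWopen (hEW hz)
end

section
/- Let X be a topological space with a [0,1]-valued metric, let z₀, z₁ ∈ X be two distinct crisply embedded points (each at distance 1 from every other point), let W be the quotient of X identifying z₀ and z₁ with the induced metric (distances between other pairs unchanged), and let π : X → W be the quotient map. If D ⊆ X is closed with {z₀, z₁} ∩ D = ∅, then π[D] is definable in W if and only if D is definable in X. -/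
open Set

/-- The relation identifying the two soldered points `z₀` and `z₁`. -/
def solderRel {X : Type*} (z₀ z₁ : X) (a b : X) : Prop :=
  (a = z₀ ∧ b = z₁) ∨ (a = z₁ ∧ b = z₀)

/-- Soldering two crisply embedded points: for a closed set `D` avoiding both points,
the image of `D` in the quotient is definable iff `D` is definable. -/
theorem stmt_8 {X : Type*} [TopologicalSpace X] (d : X → X → ℝ) (hd : BddMetric d)
    (z₀ z₁ : X) (hne : z₀ ≠ z₁)
    (hcrisp₀ : ∀ x : X, x ≠ z₀ → d z₀ x = 1) (hcrisp₁ : ∀ x : X, x ≠ z₁ → d z₁ x = 1)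
    (dW : Quot (solderRel z₀ z₁) → Quot (solderRel z₀ z₁) → ℝ)
    (hdW : ∀ x y : X, ({x, y} : Set X) ≠ {z₀, z₁} →
      dW (Quot.mk _ x) (Quot.mk _ y) = d x y)
    (hdW0 : ∀ w, dW w w = 0)
    (D : Set X) (hDcl : IsClosed D) (hz₀ : z₀ ∉ D) (hz₁ : z₁ ∉ D) :
    IsDefinable dW (Quot.mk (solderRel z₀ z₁) '' D) ↔ IsDefinable d D := by

  classical
  set π := Quot.mk (solderRel z₀ z₁) with hπ
  -- characterize equality in the quotient
  have hEq : ∀ x y : X, Relation.EqvGen (solderRel z₀ z₁) x y →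
      x = y ∨ ((x = z₀ ∨ x = z₁) ∧ (y = z₀ ∨ y = z₁)) := by
    intro x y h
    induction h with
    | rel a b hab =>
        rcases hab with ⟨ha, hb⟩ | ⟨ha, hb⟩ <;> subst ha <;> subst hb <;> tauto
    | refl a => exact Or.inl rfl
    | symm a b _ ih =>
        rcases ih with h | ⟨h1, h2⟩
        · exact Or.inl h.symm
        · exact Or.inr ⟨h2, h1⟩
    | trans a b c _ _ ih1 ih2 =>
        rcases ih1 with h | ⟨h1, h2⟩
        · rcases ih2 with h' | ⟨h1', h2'⟩
          · exact Or.inl (h.trans h')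
          · exact Or.inr ⟨h ▸ h1', h2'⟩
        · rcases ih2 with h' | ⟨h1', h2'⟩
          · exact Or.inr ⟨h1, h' ▸ h2⟩
          · exact Or.inr ⟨h1, h2'⟩
  have hinj : ∀ x a : X, a ≠ z₀ → a ≠ z₁ → π x = π a → x = a := by
    intro x a h0 h1 h
    rcases hEq x a (Quot.eq.mp h) with h | ⟨_, h2 | h2⟩
    · exact h
    · exact absurd h2 h0
    · exact absurd h2 h1
  have hDnz₀ : ∀ a ∈ D, a ≠ z₀ := fun a ha h => hz₀ (h ▸ ha)
  have hDnz₁ : ∀ a ∈ D, a ≠ z₁ := fun a ha h => hz₁ (h ▸ ha)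
  have hpair : ∀ x a : X, a ≠ z₀ → a ≠ z₁ → ({x, a} : Set X) ≠ {z₀, z₁} := by
    intro x a h0 h1 h
    have : a ∈ ({z₀, z₁} : Set X) := h ▸ (by simp)
    simp only [Set.mem_insert_iff, Set.mem_singleton_iff] at this
    tauto
  have hpreD : π ⁻¹' (π '' D) = D := by
    ext x
    constructor
    · rintro ⟨a, ha, hxa⟩
      exact hinj x a (hDnz₀ a ha) (hDnz₁ a ha) hxa.symm ▸ ha
    · exact fun h => ⟨x, h, rfl⟩
  have hpreN : ∀ r : ℝ, π ⁻¹' (nbhd dW (π '' D) r) = nbhd d D r := by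
    intro r
    ext x
    constructor
    · rintro ⟨w, ⟨a, ha, rfl⟩, hlt⟩
      refine ⟨a, ha, ?_⟩
      rwa [hdW x a (hpair x a (hDnz₀ a ha) (hDnz₁ a ha))] at hlt
    · rintro ⟨a, ha, hlt⟩
      exact ⟨π a, ⟨a, ha, rfl⟩,
        by rw [hdW x a (hpair x a (hDnz₀ a ha) (hDnz₁ a ha))]; exact hlt⟩
  have hqm : Topology.IsQuotientMap π := isQuotientMap_quot_mk
  constructor
  · rintro ⟨hcl, hsub⟩
    refine ⟨hDcl, ?_⟩
    intro r hr x hx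
    have h2 : x ∈ π ⁻¹' (interior (nbhd dW (π '' D) r)) := hsub r hr ⟨x, hx, rfl⟩
    have hopen : IsOpen (π ⁻¹' (interior (nbhd dW (π '' D) r))) :=
      isOpen_interior.preimage hqm.continuous
    have hss : π ⁻¹' (interior (nbhd dW (π '' D) r)) ⊆ nbhd d D r := by
      rw [← hpreN]; exact Set.preimage_mono interior_subset
    exact interior_maximal hss hopen h2
  · rintro ⟨_, hsub⟩
    refine ⟨by rw [← hqm.isClosed_preimage, hpreD]; exact hDcl, ?_⟩
    intro r hr
    rintro w ⟨a, ha, rfl⟩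
    by_cases hr1 : r ≤ 1
    · have haU : a ∈ interior (nbhd d D r) := hsub r hr ha
      have hz₀N : z₀ ∉ nbhd d D r := by
        rintro ⟨e, he, hlt⟩
        have : d z₀ e = 1 := hcrisp₀ e fun h => hz₀ (h ▸ he)
        linarith
      have hz₁N : z₁ ∉ nbhd d D r := by
        rintro ⟨e, he, hlt⟩
        have : d z₁ e = 1 := hcrisp₁ e fun h => hz₁ (h ▸ he)
        linarith
      set U := interior (nbhd d D r) with hU
      have hUsub : U ⊆ nbhd d D r := interior_subset
      have hUnz₀ : ∀ u ∈ U, u ≠ z₀ := fun u hu h => hz₀N (h ▸ hUsub hu)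
      have hUnz₁ : ∀ u ∈ U, u ≠ z₁ := fun u hu h => hz₁N (h ▸ hUsub hu)
      have hsat : π ⁻¹' (π '' U) = U := by
        ext x
        constructor
        · rintro ⟨u, hu, hxu⟩
          exact hinj x u (hUnz₀ u hu) (hUnz₁ u hu) hxu.symm ▸ hu
        · exact fun h => ⟨x, h, rfl⟩
      have hopen : IsOpen (π '' U) := by
        rw [← hqm.isOpen_preimage, hsat]; exact isOpen_interior
      have himg : π '' U ⊆ nbhd dW (π '' D) r := by
        rintro _ ⟨u, hu, rfl⟩
        obtain ⟨e, he, hlt⟩ := hUsub hu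
        exact ⟨π e, ⟨e, he, rfl⟩,
          by rw [hdW u e (hpair u e (hDnz₀ e he) (hDnz₁ e he))]; exact hlt⟩
      exact interior_maximal himg hopen ⟨a, haU, rfl⟩
    · push_neg at hr1
      have huniv : nbhd dW (π '' D) r = Set.univ := by
        apply Set.eq_univ_of_forall
        intro w
        obtain ⟨x, rfl⟩ := Quot.exists_rep w
        refine ⟨π a, ⟨a, ha, rfl⟩, ?_⟩
        rw [hdW x a (hpair x a (hDnz₀ a ha) (hDnz₁ a ha))]
        have := (hd.2 x a).2
        linarith
      rw [huniv, interior_univ]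
      trivial
end

section
/- Let (Xᵢ)_{i∈I} be a directed system of topological spaces each with a [0,1]-valued metric, with isometric topological embeddings f_{ij} such that each image f_{ij}[Xᵢ] is crisply embedded in X_j (every point of the image is at distance 1 from every point outside it). Let X_I be the direct limit (with the final topology and the induced metric). If D ⊆ X_I is closed and definable in X_I, then D ∩ X_j is definable in X_j for every j ∈ I (identifying X_j with its image). -/
open Set

/-- In a crisp directed system (modeled as a directed monotone family of crisply
embedded subsets `S j` of the direct limit `X`, with the final topology), any closed
definable set in the limit has definable trace on each `S j`. -/
theorem stmt_11 {ι X : Type*} [Preorder ι] [TopologicalSpace X]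
    (hdir : ∀ i j : ι, ∃ k, i ≤ k ∧ j ≤ k)
    (d : X → X → ℝ) (hd : BddMetric d)
    (S : ι → Set X) (hmono : Monotone S) (hcover : ⋃ j, S j = univ)
    (hcrisp : ∀ j : ι, ∀ a ∈ S j, ∀ x ∉ S j, d a x = 1)
    (hfinal : ∀ U : Set X, (∀ j : ι, ∃ V : Set X, IsOpen V ∧ U ∩ S j = V ∩ S j) →
      IsOpen U)
    (D : Set X) (hD : IsDefinable d D) :
    ∀ j : ι, IsDefinable (fun a b : S j => d a.1 b.1) (Subtype.val ⁻¹' D) := by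
  intro j
  constructor
  · exact hD.1.preimage continuous_subtype_val
  · intro r hr a ha
    by_cases hr1 : r ≤ 1
    · -- use definability of D in X
      have haD : a.1 ∈ interior (nbhd d D r) := hD.2 r hr (by exact ha)
      have hsub : (Subtype.val ⁻¹' (interior (nbhd d D r)) : Set (S j)) ⊆
          nbhd (fun a b : S j => d a.1 b.1) (Subtype.val ⁻¹' D) r := by
        intro x hx
        obtain ⟨e, heD, hde⟩ := interior_subset hx
        have heS : e ∈ S j := by
          by_contra he
          have := hcrisp j x.1 x.2 e he
          linarith
        exact ⟨⟨e, heS⟩, heD, hde⟩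
      have hopen : IsOpen (Subtype.val ⁻¹' (interior (nbhd d D r)) : Set (S j)) :=
        isOpen_interior.preimage continuous_subtype_val
      exact interior_maximal hsub hopen haD

    · -- r > 1 : the neighborhood is everything
      push_neg at hr1
      have : nbhd (fun a b : S j => d a.1 b.1) (Subtype.val ⁻¹' D) r = univ := by
        ext x
        simp only [mem_univ, iff_true]
        exact ⟨a, ha, lt_of_le_of_lt (hd.2 x.1 a.1).2 hr1⟩
      rw [this, interior_univ]
      trivial
end

section
/- With the same setup as the crisp directed system (each X_j crisply embedded in X_I, direct limit topology), if additionally each metric d_j is open and D ⊆ X_I is closed with D ∩ X_j definable in X_j for every j ∈ I, then D is definable in X_I. -/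
open Set

/-- Key lemma: in a space with an open metric, a definable set's `s`-neighborhood is
contained in the interior of its `(s+u)`-neighborhood. -/
lemma key_lemma {Y : Type*} [TopologicalSpace Y] (d : Y → Y → ℝ)
    (htri : ∀ x y z, d x z ≤ d x y + d y z) (ho : IsOpenMetric d)
    (D : Set Y) (hdef : IsDefinable d D) {s u : ℝ} (hs : 0 < s) (hu : 0 < u) :
    nbhd d D s ⊆ interior (nbhd d D (s + u)) := by
  have h1 : D ⊆ interior (nbhd d D u) := hdef.2 u hu
  have h3 : IsOpen (nbhd d (interior (nbhd d D u)) s) := ho _ isOpen_interior s hs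
  have h4 : nbhd d (interior (nbhd d D u)) s ⊆ nbhd d D (s + u) := by
    rintro x ⟨a, ha, hda⟩
    obtain ⟨b, hb, hab⟩ := interior_subset ha
    exact ⟨b, hb, lt_of_le_of_lt (htri x a b) (by linarith)⟩
  rintro x ⟨a, ha, hda⟩
  exact interior_maximal h4 h3 ⟨a, h1 ha, hda⟩
/-- In a crisp directed system with each piece's metric open, a closed set whose trace
on each `S j` is definable is definable in the direct limit. -/
theorem stmt_12 {ι X : Type*} [Preorder ι] [TopologicalSpace X]
    (hdir : ∀ i j : ι, ∃ k, i ≤ k ∧ j ≤ k)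
    (d : X → X → ℝ) (hd : BddMetric d)
    (S : ι → Set X) (hmono : Monotone S) (hcover : ⋃ j, S j = univ)
    (hcrisp : ∀ j : ι, ∀ a ∈ S j, ∀ x ∉ S j, d a x = 1)
    (hfinal : ∀ U : Set X, (∀ j : ι, ∃ V : Set X, IsOpen V ∧ U ∩ S j = V ∩ S j) →
      IsOpen U)
    (hopen : ∀ j : ι, IsOpenMetric (fun a b : S j => d a.1 b.1))
    (D : Set X) (hDcl : IsClosed D)
    (hDj : ∀ j : ι, IsDefinable (fun a b : S j => d a.1 b.1) (Subtype.val ⁻¹' D)) :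
    IsDefinable d D := by
  obtain ⟨⟨heq, hsym, htri⟩, hbdd⟩ := hd
  refine ⟨hDcl, ?_⟩
  intro r hr
  set r' := min r 1 with hr'def
  have hr'pos : 0 < r' := lt_min hr one_pos
  have hr'le1 : r' ≤ 1 := min_le_right r 1
  have hr'ler : r' ≤ r := min_le_left r 1
  set U : Set X := {x | ∃ m : ι, ∃ hxm : x ∈ S m, ∃ s1 s2 : ℝ,
    0 < s1 ∧ 0 < s2 ∧ s1 + s2 < r' ∧
    (⟨x, hxm⟩ : S m) ∈ nbhd (fun a b : S m => d a.1 b.1)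
      (interior (nbhd (fun a b : S m => d a.1 b.1) (Subtype.val ⁻¹' D) s2)) s1} with hUdef
  have hUsub : U ⊆ nbhd d D r := by
    rintro x ⟨m, hxm, s1, s2, hs1, hs2, hsum, a, ha, hxa⟩
    obtain ⟨b, hb, hab⟩ := interior_subset ha
    have hxa' : d x a.1 < s1 := hxa
    have hab' : d a.1 b.1 < s2 := hab
    exact ⟨b.1, hb, lt_of_le_of_lt (htri x a.1 b.1) (by linarith)⟩
  have hDU : D ⊆ U := by
    intro x hxD
    have hxuniv : x ∈ ⋃ j, S j := by rw [hcover]; exact mem_univ x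
    obtain ⟨m, hxm⟩ := mem_iUnion.1 hxuniv
    refine ⟨m, hxm, r'/4, r'/4, by linarith, by linarith, by linarith, ?_⟩
    refine ⟨⟨x, hxm⟩, (hDj m).2 (r'/4) (by linarith) hxD, ?_⟩
    show d x x < r'/4
    rw [(heq x x).2 rfl]
    linarith
  have hUopen : IsOpen U := by
    apply hfinal
    intro k
    have hopen_pre : IsOpen (Subtype.val ⁻¹' U : Set (S k)) := by
      have hrepr : (Subtype.val ⁻¹' U : Set (S k)) =
          ⋃ s1 : ℝ, ⋃ s2 : ℝ, ⋃ (_ : 0 < s1 ∧ 0 < s2 ∧ s1 + s2 < r'),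
            nbhd (fun a b : S k => d a.1 b.1)
              (interior (nbhd (fun a b : S k => d a.1 b.1) (Subtype.val ⁻¹' D) s2)) s1 := by
        ext x
        simp only [mem_preimage, mem_iUnion]
        constructor
        · rintro ⟨m, hxm, s1, s2, hs1, hs2, hsum, a, ha, hxa⟩
          have haD : a ∈ nbhd (fun a b : S m => d a.1 b.1) (Subtype.val ⁻¹' D) s2 :=
            interior_subset ha
          obtain ⟨b, hbD, hab⟩ := haD
          have hxa' : d x.1 a.1 < s1 := hxa
          have hab' : d a.1 b.1 < s2 := hab
          have hak : a.1 ∈ S k := by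
            by_contra h
            have h1 := hcrisp k x.1 x.2 a.1 h
            linarith
          have hbk : b.1 ∈ S k := by
            by_contra h
            have h1 := hcrisp k a.1 hak b.1 h
            linarith
          have hupos : 0 < (r' - s1 - s2)/2 := by linarith
          refine ⟨s1, s2 + (r' - s1 - s2)/2, ⟨hs1, by linarith, by linarith⟩, ?_⟩
          have hmem : (⟨a.1, hak⟩ : S k) ∈
              nbhd (fun a b : S k => d a.1 b.1) (Subtype.val ⁻¹' D) s2 :=
            ⟨⟨b.1, hbk⟩, hbD, hab'⟩
          have hint := key_lemma (fun a b : S k => d a.1 b.1)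
            (fun x y z => htri x.1 y.1 z.1) (hopen k) _ (hDj k) hs2 hupos hmem
          exact ⟨⟨a.1, hak⟩, hint, hxa'⟩
        · rintro ⟨s1, s2, ⟨hs1, hs2, hsum⟩, hx⟩
          exact ⟨k, x.2, s1, s2, hs1, hs2, hsum, hx⟩
      rw [hrepr]
      refine isOpen_iUnion fun s1 => isOpen_iUnion fun s2 => isOpen_iUnion ?_
      rintro ⟨hs1, hs2, hsum⟩
      exact hopen k _ isOpen_interior s1 hs1
    rw [isOpen_induced_iff] at hopen_pre
    obtain ⟨V, hV, hVU⟩ := hopen_pre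
    refine ⟨V, hV, ?_⟩
    ext x
    constructor
    · rintro ⟨hxU, hxk⟩
      exact ⟨(Set.ext_iff.1 hVU ⟨x, hxk⟩).2 hxU, hxk⟩
    · rintro ⟨hxV, hxk⟩
      exact ⟨(Set.ext_iff.1 hVU ⟨x, hxk⟩).1 hxV, hxk⟩
  exact hDU.trans (interior_maximal hUsub hUopen)
end

section
/- Let X be a compact Hausdorff space with a lower semi-continuous [0,1]-valued metric d refining the topology. For any two points x ≠ y in X and any r with 0 < r < d(x,y), there exists a (1/r)-Lipschitz continuous function f : X → [0,1] with f(x) = 0 and f(y) = 1. -/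
open Set Filter Topology

set_option linter.unusedSectionVars false
set_option maxHeartbeats 1000000

section Aux
variable {X : Type*} [TopologicalSpace X] [CompactSpace X] [T2Space X]
variable (d : X → X → ℝ)

lemma open_far (hlsc : LowerSemicontinuous (fun p : X × X => d p.1 p.2))
    (K : Set X) (hK : IsCompact K) (c : ℝ) :
    IsOpen {z | ∀ a ∈ K, c < d a z} := by
  rw [isOpen_iff_mem_nhds]
  intro z hz
  have h : ∀ a ∈ K, ∃ u : Set X, ∃ v : Set X, IsOpen u ∧ a ∈ u ∧ v ∈ 𝓝 z ∧
      ∀ a' ∈ u, ∀ z' ∈ v, c < d a' z' := by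
    intro a ha
    have h1 : {p : X × X | c < d p.1 p.2} ∈ 𝓝 (a, z) := by
      have := hlsc (a, z) c (hz a ha)
      rwa [Filter.eventually_iff] at this
    rw [mem_nhds_prod_iff'] at h1
    obtain ⟨u, v, hu, hau, hv, hzv, huv⟩ := h1
    exact ⟨u, v, hu, hau, hv.mem_nhds hzv,
      fun a' ha' z' hz' => huv (Set.mk_mem_prod ha' hz')⟩
  choose u v hu hau hv huv using h
  obtain ⟨t, ht⟩ := hK.elim_nhds_subcover' (fun a ha => u a ha)
    (fun a ha => (hu a ha).mem_nhds (hau a ha))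
  have hV : (⋂ a ∈ t, v a a.2) ∈ 𝓝 z := (Filter.biInter_finset_mem t).mpr (fun a _ => hv a a.2)
  refine Filter.mem_of_superset hV ?_
  intro z' hz' a ha
  obtain ⟨b, hb⟩ := Set.mem_iUnion₂.mp (ht ha)
  obtain ⟨hbt, hab⟩ := hb
  exact huv b b.2 a hab z' (by exact Set.mem_iInter₂.mp hz' b hbt)

lemma isClosed_near (hlsc : LowerSemicontinuous (fun p : X × X => d p.1 p.2))
    (K : Set X) (hK : IsCompact K) (c : ℝ) :
    IsClosed {z | ∃ a ∈ K, d a z ≤ c} := by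
  have h : {z | ∃ a ∈ K, d a z ≤ c} = {z | ∀ a ∈ K, c < d a z}ᶜ := by
    ext z
    simp only [Set.mem_setOf_eq, Set.mem_compl_iff, not_forall, not_lt]
    constructor
    · rintro ⟨a, ha, hd⟩; exact ⟨a, ha, hd⟩
    · rintro ⟨a, ha, hd⟩; exact ⟨a, ha, hd⟩
  rw [h, isClosed_compl_iff]
  exact open_far d hlsc K hK c

lemma open_far' (hsymm : ∀ a b, d a b = d b a)
    (hlsc : LowerSemicontinuous (fun p : X × X => d p.1 p.2))
    (K : Set X) (hK : IsCompact K) (c : ℝ) :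
    IsOpen {z | ∀ b ∈ K, c < d z b} := by
  have h : {z | ∀ b ∈ K, c < d z b} = {z | ∀ b ∈ K, c < d b z} := by
    ext z
    exact forall₂_congr (fun b _ => by rw [hsymm z b])
  rw [h]
  exact open_far d hlsc K hK c

end Aux

section Construction

variable {X : Type*} [TopologicalSpace X] [CompactSpace X] [T2Space X]

/-- The invariant of the Urysohn-style construction. -/
def Pinv (d : X → X → ℝ) (x y : X) (lam : ℝ) (U : ℚ → Set X) (F : Finset ℚ) : Prop :=
  ∀ q ∈ F, IsOpen (U q) ∧ x ∈ U q ∧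
    (∀ a ∈ closure (U q), lam * (1 - (q : ℝ)) < d a y) ∧
    (∀ b, b ∉ U q → lam * (q : ℝ) < d x b) ∧
    ∀ p ∈ F, p < q →
      closure (U p) ⊆ U q ∧
      ∀ a ∈ closure (U p), ∀ b, b ∉ U q → lam * ((q : ℝ) - (p : ℝ)) < d a b

lemma Pinv_empty (d : X → X → ℝ) (x y : X) (lam : ℝ) (U : ℚ → Set X) :
    Pinv d x y lam U ∅ := by
  intro q hq
  exact absurd hq (Finset.notMem_empty q)

lemma Pinv_step {d : X → X → ℝ} {x y : X} {lam : ℝ}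
    (hd0 : ∀ z, d z z = 0) (hsymm : ∀ a b, d a b = d b a)
    (htri : ∀ a b c, d a c ≤ d a b + d b c)
    (hlsc : LowerSemicontinuous (fun p : X × X => d p.1 p.2))
    (hlam : 0 < lam) (hxy : lam < d x y)
    {U : ℚ → Set X} {F : Finset ℚ} (hP : Pinv d x y lam U F)
    {m : ℚ} (hm0 : 0 ≤ m) (hm1 : m < 1) (hmF : m ∉ F) :
    ∃ W : Set X, Pinv d x y lam (Function.update U m W) (insert m F) := by
  classical
  have hm0' : (0:ℝ) ≤ (m:ℝ) := by exact_mod_cast hm0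
  have hm1' : (m:ℝ) < 1 := by exact_mod_cast hm1
  set A1 : Set X := {z | ∃ a ∈ ({x} : Set X), d a z ≤ lam * (m : ℝ)} with hA1def
  set A2 : Set X :=
    ⋃ p ∈ F.filter (fun p => p < m), {z | ∃ a ∈ closure (U p), d a z ≤ lam * ((m : ℝ) - (p : ℝ))}
    with hA2def
  set A : Set X := A1 ∪ A2 with hAdef
  set Om : Set X := {z | ∀ b ∈ ({y} : Set X), lam * (1 - (m:ℝ)) < d z b} ∩
      ⋂ q ∈ F.filter (fun q => m < q), {z | ∀ b ∈ (U q)ᶜ, lam * ((q:ℝ) - (m:ℝ)) < d z b}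
    with hOmdef
  have hA_closed : IsClosed A := by
    refine IsClosed.union (isClosed_near d hlsc _ (isCompact_singleton) _) ?_
    refine Set.Finite.isClosed_biUnion (Finset.finite_toSet _) (fun p hp => ?_)
    exact isClosed_near d hlsc _ (isClosed_closure.isCompact) _
  have hOm_open : IsOpen Om := by
    refine IsOpen.inter (open_far' d hsymm hlsc _ (isCompact_singleton) _) ?_
    refine Set.Finite.isOpen_biInter (Finset.finite_toSet _) (fun q hq => ?_)
    have hq' := Finset.mem_filter.mp hq
    have hUq : IsOpen (U q) := (hP q hq'.1).1
    exact open_far' d hsymm hlsc _ (hUq.isClosed_compl.isCompact) _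
  have hAOm : A ⊆ Om := by
    rintro z (hz | hz)
    · obtain ⟨a, ha, hdz⟩ := hz
      rw [Set.mem_singleton_iff] at ha
      rw [ha] at hdz
      constructor
      · intro b hb
        rw [Set.mem_singleton_iff] at hb
        rw [hb]
        have h1 := htri x z y
        have he : lam * (1 - (m:ℝ)) = lam - lam * (m:ℝ) := by ring
        linarith
      · simp only [Set.mem_iInter]
        intro q hq b hb
        have hq' := Finset.mem_filter.mp hq
        have hmq : (m:ℝ) < (q:ℝ) := by exact_mod_cast hq'.2
        have h5 := (hP q hq'.1).2.2.2.1 b hb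
        have h1 := htri x z b
        have he : lam * ((q:ℝ) - (m:ℝ)) = lam * (q:ℝ) - lam * (m:ℝ) := by ring
        linarith
    · rw [hA2def] at hz
      obtain ⟨p, hp, a, haU, hdz⟩ := by
        simpa only [Set.mem_iUnion, Set.mem_setOf_eq, exists_prop] using hz
      have hp' := Finset.mem_filter.mp hp
      have hpm : (p:ℝ) < (m:ℝ) := by exact_mod_cast hp'.2
      constructor
      · intro b hb
        rw [Set.mem_singleton_iff] at hb
        rw [hb]
        have h2 := (hP p hp'.1).2.2.1 a haU
        have h1 := htri a z y
        have he : lam * (1 - (m:ℝ)) = lam * (1 - (p:ℝ)) - lam * ((m:ℝ) - (p:ℝ)) := by ring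
        linarith
      · simp only [Set.mem_iInter]
        intro q hq b hb
        have hq' := Finset.mem_filter.mp hq
        have hmq : (m:ℝ) < (q:ℝ) := by exact_mod_cast hq'.2
        have hpq : p < q := lt_trans hp'.2 hq'.2
        have h4 := ((hP q hq'.1).2.2.2.2 p hp'.1 hpq).2 a haU b hb
        have h1 := htri a z b
        have he : lam * ((q:ℝ) - (m:ℝ)) = lam * ((q:ℝ) - (p:ℝ)) - lam * ((m:ℝ) - (p:ℝ)) := by ring
        linarith
  obtain ⟨W, hWopen, hAW, hWOm⟩ := normal_exists_closure_subset hA_closed hOm_open hAOm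
  have hOmU : ∀ q ∈ F, m < q → Om ⊆ U q := by
    intro q hqF hmq z hz
    by_contra hzU
    have hq : q ∈ F.filter (fun q => m < q) := Finset.mem_filter.mpr ⟨hqF, hmq⟩
    have h := (Set.mem_iInter₂.mp hz.2 q hq) z hzU
    have hmq' : (m:ℝ) < (q:ℝ) := by exact_mod_cast hmq
    rw [hd0 z] at h
    nlinarith
  -- closure of old sets below m is inside A
  have hclA : ∀ p ∈ F, p < m → closure (U p) ⊆ A := by
    intro p hpF hpm z hz
    right
    rw [hA2def]
    refine Set.mem_iUnion₂.mpr ⟨p, Finset.mem_filter.mpr ⟨hpF, hpm⟩, ?_⟩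
    refine ⟨z, hz, ?_⟩
    rw [hd0 z]
    have hpm' : (p:ℝ) < (m:ℝ) := by exact_mod_cast hpm
    nlinarith
  refine ⟨W, ?_⟩
  intro q hq
  rcases Finset.mem_insert.mp hq with hqem | hqF
  · -- the new index m
    subst hqem
    rw [Function.update_self]
    refine ⟨hWopen, ?_, ?_, ?_, ?_⟩
    · apply hAW
      left
      exact ⟨x, rfl, by rw [hd0 x]; nlinarith⟩
    · intro a ha
      have := (hWOm ha).1 y rfl
      exact this
    · intro b hb
      have hbA : b ∉ A := fun h => hb (hAW h)
      have hbA1 : b ∉ A1 := fun h => hbA (Or.inl h)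
      rw [hA1def] at hbA1
      simp only [Set.mem_setOf_eq, Set.mem_singleton_iff, not_exists, not_and, not_le,
        exists_eq_left] at hbA1
      exact hbA1
    · intro p hpF' hpm
      have hpF : p ∈ F := by
        rcases Finset.mem_insert.mp hpF' with h | h
        · rw [h] at hpm; exact absurd hpm (lt_irrefl _)
        · exact h
      rw [Function.update_of_ne (ne_of_lt hpm) _ _]
      constructor
      · exact fun z hz => hAW (hclA p hpF hpm hz)
      · intro a ha b hb
        have hbA : b ∉ A := fun h => hb (hAW h)
        have hbA2 : b ∉ A2 := fun h => hbA (Or.inr h)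
        rw [hA2def] at hbA2
        simp only [Set.mem_iUnion, Set.mem_setOf_eq, not_exists] at hbA2
        have := hbA2 p (Finset.mem_filter.mpr ⟨hpF, hpm⟩)
        simp only [not_exists, not_and, not_le] at this
        exact this a ha
  · -- an old index q ∈ F
    have hqm : q ≠ m := fun h => hmF (by rw [← h]; exact hqF)
    rw [Function.update_of_ne hqm _ _]
    obtain ⟨h1, h2, h3, h4, h5⟩ := hP q hqF
    refine ⟨h1, h2, h3, h4, ?_⟩
    intro p hpF' hpq
    rcases Finset.mem_insert.mp hpF' with hpem | hpF
    · -- p = m : new pair (m, q)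
      have hmq : m < q := by rw [← hpem]; exact hpq
      rw [hpem, Function.update_self]
      have hq' : q ∈ F.filter (fun q => m < q) := Finset.mem_filter.mpr ⟨hqF, hmq⟩
      constructor
      · exact fun z hz => hOmU q hqF hmq (hWOm hz)
      · intro a ha b hb
        exact (Set.mem_iInter₂.mp (hWOm ha).2 q hq') b hb
    · rw [Function.update_of_ne (fun h : p = m => hmF (by rw [← h]; exact hpF)) _ _]
      exact h5 p hpF hpq

end Construction

section Recursion

variable {X : Type*} [TopologicalSpace X] [CompactSpace X] [T2Space X]

/-- Finite sets of rationals handled after `n` steps. -/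
def Fnn (e : ℕ → ℚ) : ℕ → Finset ℚ := fun n => Nat.rec ∅ (fun k F => insert (e k) F) n

lemma Fnn_zero (e : ℕ → ℚ) : Fnn e 0 = ∅ := rfl

lemma Fnn_succ (e : ℕ → ℚ) (n : ℕ) : Fnn e (n + 1) = insert (e n) (Fnn e n) := rfl

lemma mem_Fnn (e : ℕ → ℚ) (n : ℕ) (q : ℚ) : q ∈ Fnn e n ↔ ∃ k, k < n ∧ e k = q := by
  induction n with
  | zero => simp [Fnn_zero]
  | succ n ih =>
    rw [Fnn_succ, Finset.mem_insert, ih]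
    constructor
    · rintro (h | ⟨k, hk, hek⟩)
      · exact ⟨n, Nat.lt_succ_self n, h.symm⟩
      · exact ⟨k, Nat.lt_succ_of_lt hk, hek⟩
    · rintro ⟨k, hk, hek⟩
      rcases Nat.lt_succ_iff_lt_or_eq.mp hk with h | h
      · exact Or.inr ⟨k, h, hek⟩
      · exact Or.inl (by rw [← hek, h])

lemma e_notMem_Fnn {e : ℕ → ℚ} (hinj : Function.Injective e) (n : ℕ) : e n ∉ Fnn e n := by
  rw [mem_Fnn]
  rintro ⟨k, hk, hek⟩
  exact absurd (hinj hek) (Nat.ne_of_lt hk)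

lemma Fnn_mono (e : ℕ → ℚ) {n k : ℕ} (h : n ≤ k) : Fnn e n ⊆ Fnn e k := by
  intro q hq
  rw [mem_Fnn] at hq ⊢
  obtain ⟨j, hj, hej⟩ := hq
  exact ⟨j, lt_of_lt_of_le hj h, hej⟩

variable {d : X → X → ℝ} {x y : X} {lam : ℝ}

/-- The recursively constructed family of open sets. -/
noncomputable def Gseq
    (hd0 : ∀ z, d z z = 0) (hsymm : ∀ a b, d a b = d b a)
    (htri : ∀ a b c, d a c ≤ d a b + d b c)
    (hlsc : LowerSemicontinuous (fun p : X × X => d p.1 p.2))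
    (hlam : 0 < lam) (hxy : lam < d x y)
    (e : ℕ → ℚ) (he : ∀ n, 0 ≤ e n ∧ e n < 1) (hinj : Function.Injective e) :
    (n : ℕ) → {U : ℚ → Set X // Pinv d x y lam U (Fnn e n)} :=
  fun n => Nat.rec
    ⟨fun _ => (∅ : Set X), Pinv_empty d x y lam _⟩
    (fun k prev =>
      let h := Pinv_step hd0 hsymm htri hlsc hlam hxy prev.2
        (he k).1 (he k).2 (e_notMem_Fnn hinj k)
      ⟨Function.update prev.1 (e k) h.choose, h.choose_spec⟩)
    n

lemma Gseq_succ_val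
    (hd0 : ∀ z, d z z = 0) (hsymm : ∀ a b, d a b = d b a)
    (htri : ∀ a b c, d a c ≤ d a b + d b c)
    (hlsc : LowerSemicontinuous (fun p : X × X => d p.1 p.2))
    (hlam : 0 < lam) (hxy : lam < d x y)
    (e : ℕ → ℚ) (he : ∀ n, 0 ≤ e n ∧ e n < 1) (hinj : Function.Injective e)
    (n : ℕ) (p : ℚ) (hp : p ≠ e n) :
    (Gseq hd0 hsymm htri hlsc hlam hxy e he hinj (n+1)).1 p
      = (Gseq hd0 hsymm htri hlsc hlam hxy e he hinj n).1 p := by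
  show (Function.update (Gseq hd0 hsymm htri hlsc hlam hxy e he hinj n).1 (e n) _) p = _
  exact Function.update_of_ne hp _ _

lemma Gseq_stable
    (hd0 : ∀ z, d z z = 0) (hsymm : ∀ a b, d a b = d b a)
    (htri : ∀ a b c, d a c ≤ d a b + d b c)
    (hlsc : LowerSemicontinuous (fun p : X × X => d p.1 p.2))
    (hlam : 0 < lam) (hxy : lam < d x y)
    (e : ℕ → ℚ) (he : ∀ n, 0 ≤ e n ∧ e n < 1) (hinj : Function.Injective e)
    (n : ℕ) (q : ℚ) (hq : q ∈ Fnn e n) :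
    ∀ k, (Gseq hd0 hsymm htri hlsc hlam hxy e he hinj (n + k)).1 q
      = (Gseq hd0 hsymm htri hlsc hlam hxy e he hinj n).1 q := by
  intro k
  induction k with
  | zero => rfl
  | succ k ih =>
    have hne : q ≠ e (n + k) := by
      intro h
      exact e_notMem_Fnn hinj (n + k) (by rw [← h]; exact Fnn_mono e (Nat.le_add_right n k) hq)
    rw [show n + (k+1) = (n + k) + 1 from rfl,
      Gseq_succ_val hd0 hsymm htri hlsc hlam hxy e he hinj (n+k) q hne, ih]

lemma Gseq_agree
    (hd0 : ∀ z, d z z = 0) (hsymm : ∀ a b, d a b = d b a)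
    (htri : ∀ a b c, d a c ≤ d a b + d b c)
    (hlsc : LowerSemicontinuous (fun p : X × X => d p.1 p.2))
    (hlam : 0 < lam) (hxy : lam < d x y)
    (e : ℕ → ℚ) (he : ∀ n, 0 ≤ e n ∧ e n < 1) (hinj : Function.Injective e)
    (n₁ n₂ : ℕ) (q : ℚ) (hq₁ : q ∈ Fnn e n₁) (hq₂ : q ∈ Fnn e n₂) :
    (Gseq hd0 hsymm htri hlsc hlam hxy e he hinj n₁).1 q
      = (Gseq hd0 hsymm htri hlsc hlam hxy e he hinj n₂).1 q := by
  rcases Nat.le_total n₁ n₂ with h | h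
  · obtain ⟨k, rfl⟩ := Nat.exists_eq_add_of_le h
    exact (Gseq_stable hd0 hsymm htri hlsc hlam hxy e he hinj n₁ q hq₁ k).symm
  · obtain ⟨k, rfl⟩ := Nat.exists_eq_add_of_le h
    exact Gseq_stable hd0 hsymm htri hlsc hlam hxy e he hinj n₂ q hq₂ k

end Recursion

lemma exists_enum : ∃ e : ℕ → ℚ, Function.Injective e ∧ (∀ n, 0 ≤ e n ∧ e n < 1) ∧
    ∀ q : ℚ, 0 ≤ q → q < 1 → ∃ n, e n = q := by
  classical
  haveI : Infinite {q : ℚ // 0 ≤ q ∧ q < 1} := by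
    refine Infinite.of_injective (fun n : ℕ => ⟨((n : ℚ) + 2)⁻¹, ?_, ?_⟩) ?_
    · positivity
    · have h2 : (1:ℚ) < (n:ℚ) + 2 := by
        have : (0:ℚ) ≤ (n:ℚ) := Nat.cast_nonneg n
        linarith
      exact inv_lt_one_of_one_lt₀ h2
    · intro a b hab
      simp only [Subtype.mk_eq_mk, inv_inj] at hab
      exact_mod_cast add_right_cancel hab
  haveI := Denumerable.ofEncodableOfInfinite {q : ℚ // 0 ≤ q ∧ q < 1}
  set E := Denumerable.eqv {q : ℚ // 0 ≤ q ∧ q < 1}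
  refine ⟨fun n => (E.symm n : ℚ), ?_, fun n => (E.symm n).2, fun q h1 h2 => ?_⟩
  · intro a b hab
    exact E.symm.injective (Subtype.coe_injective hab)
  · exact ⟨E ⟨q, h1, h2⟩, by simp⟩

/-- Topometric Urysohn-type separation: in a compact Hausdorff space with a lower
semi-continuous `[0,1]`-valued metric refining the topology, points at distance `> r`
are separated by a `(1/r)`-Lipschitz continuous `[0,1]`-valued function. -/
theorem stmt_18 {X : Type*} [TopologicalSpace X] [CompactSpace X] [T2Space X]
    (d : X → X → ℝ)
    (hmet : (∀ x y, d x y = 0 ↔ x = y) ∧ (∀ x y, d x y = d y x) ∧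
      (∀ x y z, d x z ≤ d x y + d y z) ∧ ∀ x y, 0 ≤ d x y ∧ d x y ≤ 1)
    (hlsc : LowerSemicontinuous (fun p : X × X => d p.1 p.2))
    (hrefine : ∀ (U : Set X) (x : X), IsOpen U → x ∈ U →
      ∃ ε > 0, ∀ y : X, d x y < ε → y ∈ U)
    (x y : X) (hxy : x ≠ y) (r : ℝ) (hr : 0 < r) (hrd : r < d x y) :
    ∃ f : X → ℝ, Continuous f ∧ (∀ z, f z ∈ Set.Icc (0 : ℝ) 1) ∧
      (∀ a b : X, |f a - f b| ≤ (1 / r) * d a b) ∧ f x = 0 ∧ f y = 1 := by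
  classical
  obtain ⟨h0, hsymm, htri, hbd⟩ := hmet
  have hd0 : ∀ z, d z z = 0 := fun z => (h0 z z).mpr rfl
  have hnonneg : ∀ a b, 0 ≤ d a b := fun a b => (hbd a b).1
  set lam : ℝ := (r + d x y) / 2 with hlamdef
  have hrlam : r < lam := by rw [hlamdef]; linarith
  have hlamxy : lam < d x y := by rw [hlamdef]; linarith
  have hlam : 0 < lam := lt_trans hr hrlam
  obtain ⟨e, hinj, he, hsurj⟩ := exists_enum
  set G := Gseq hd0 hsymm htri hlsc hlam hlamxy e he hinj with hGdef
  choose idx hidx using hsurj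
  set UF : ℚ → Set X :=
    fun q => if h : 0 ≤ q ∧ q < 1 then (G (idx q h.1 h.2 + 1)).1 q else ∅ with hUFdef
  have hmemFn : ∀ (q : ℚ) (h1 : 0 ≤ q) (h2 : q < 1), q ∈ Fnn e (idx q h1 h2 + 1) := by
    intro q h1 h2
    rw [mem_Fnn]
    exact ⟨idx q h1 h2, Nat.lt_succ_self _, hidx q h1 h2⟩
  have hUFeq : ∀ (n : ℕ) (q : ℚ), q ∈ Fnn e n → UF q = (G n).1 q := by
    intro n q hq
    obtain ⟨k, hk, hek⟩ := (mem_Fnn e n q).mp hq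
    have h1 : 0 ≤ q := by rw [← hek]; exact (he k).1
    have h2 : q < 1 := by rw [← hek]; exact (he k).2
    rw [hUFdef]
    simp only [dif_pos (And.intro h1 h2)]
    exact Gseq_agree hd0 hsymm htri hlsc hlam hlamxy e he hinj _ n q (hmemFn q h1 h2) hq
  -- single-index facts
  have key : ∀ q : ℚ, 0 ≤ q → q < 1 →
      IsOpen (UF q) ∧ x ∈ UF q ∧
      (∀ a ∈ closure (UF q), lam * (1 - (q:ℝ)) < d a y) ∧
      (∀ b, b ∉ UF q → lam * (q:ℝ) < d x b) := by
    intro q h1 h2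
    have hq := hmemFn q h1 h2
    have hP := (G (idx q h1 h2 + 1)).2 q hq
    rw [hUFeq _ q hq]
    exact ⟨hP.1, hP.2.1, hP.2.2.1, hP.2.2.2.1⟩
  -- pairwise facts
  have key2 : ∀ q q' : ℚ, 0 ≤ q → q < 1 → 0 ≤ q' → q' < 1 → q < q' →
      closure (UF q) ⊆ UF q' ∧
      ∀ a ∈ closure (UF q), ∀ b, b ∉ UF q' → lam * ((q':ℝ) - (q:ℝ)) < d a b := by
    intro q q' h1 h2 h1' h2' hlt
    set n := max (idx q h1 h2 + 1) (idx q' h1' h2' + 1) with hndef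
    have hqn : q ∈ Fnn e n := Fnn_mono e (le_max_left _ _) (hmemFn q h1 h2)
    have hq'n : q' ∈ Fnn e n := Fnn_mono e (le_max_right _ _) (hmemFn q' h1' h2')
    have hP := ((G n).2 q' hq'n).2.2.2.2 q hqn hlt
    rw [hUFeq n q hqn, hUFeq n q' hq'n]
    exact hP
  -- the function
  set T : X → Set ℝ :=
    fun z => {t | t = 1 ∨ ∃ q : ℚ, 0 ≤ q ∧ q < 1 ∧ z ∈ UF q ∧ t = (q:ℝ)} with hTdef
  set f : X → ℝ := fun z => sInf (T z) with hfdef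
  have hTne : ∀ z, (T z).Nonempty := fun z => ⟨1, Or.inl rfl⟩
  have hTlb : ∀ z, ∀ t ∈ T z, (0:ℝ) ≤ t := by
    intro z t ht
    rcases ht with h | ⟨q, hq0, _, _, rfl⟩
    · rw [h]; norm_num
    · exact_mod_cast hq0
  have hTbdd : ∀ z, BddBelow (T z) := fun z => ⟨0, fun t ht => hTlb z t ht⟩
  have hf0 : ∀ z, 0 ≤ f z := fun z => le_csInf (hTne z) (hTlb z)
  have hf1 : ∀ z, f z ≤ 1 := fun z => csInf_le (hTbdd z) (Or.inl rfl)
  have hfle : ∀ (z : X) (q : ℚ), 0 ≤ q → q < 1 → z ∈ UF q → f z ≤ (q:ℝ) :=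
    fun z q h1 h2 hz => csInf_le (hTbdd z) (Or.inr ⟨q, h1, h2, hz, rfl⟩)
  have hfge : ∀ (z : X) (q : ℚ), 0 ≤ q → q < 1 → z ∉ UF q → (q:ℝ) ≤ f z := by
    intro z q h1 h2 hz
    refine le_csInf (hTne z) ?_
    intro t ht
    rcases ht with h | ⟨p, hp0, hp1, hzp, rfl⟩
    · rw [h]; exact_mod_cast le_of_lt h2
    · rcases lt_trichotomy p q with h | h | h
      · exact absurd ((key2 p q hp0 hp1 h1 h2 h).1 (subset_closure hzp)) hz
      · exact absurd (h ▸ hzp) hz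
      · exact_mod_cast le_of_lt h
  have hfx : f x = 0 := by
    have h1 : f x ≤ ((0:ℚ):ℝ) := hfle x 0 le_rfl one_pos (key 0 le_rfl one_pos).2.1
    have h2 := hf0 x
    push_cast at h1
    linarith
  have hfy : f y = 1 := by
    refine le_antisymm (hf1 y) (le_csInf (hTne y) ?_)
    intro t ht
    rcases ht with h | ⟨q, hq0, hq1, hyq, rfl⟩
    · rw [h]
    · exfalso
      have := (key q hq0 hq1).2.2.1 y (subset_closure hyq)
      rw [hd0 y] at this
      have hq1' : (q:ℝ) < 1 := by exact_mod_cast hq1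
      nlinarith
  refine ⟨f, ?_, fun z => ⟨hf0 z, hf1 z⟩, ?_, hfx, hfy⟩
  · -- continuity
    rw [continuous_iff_continuousAt]
    intro z
    rw [ContinuousAt, Metric.tendsto_nhds]
    intro ε hε
    have hupper : ∀ᶠ w in 𝓝 z, f w < f z + ε := by
      by_cases hc : 1 < f z + ε
      · exact Filter.Eventually.of_forall (fun w => lt_of_le_of_lt (hf1 w) hc)
      · push_neg at hc
        have hflt1 : f z < 1 := by linarith
        obtain ⟨q, hq1, hq2⟩ := exists_rat_btwn (lt_min (by linarith : f z < f z + ε) hflt1)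
        have hq0 : (0:ℚ) ≤ q := by
          have : (0:ℝ) < (q:ℝ) := lt_of_le_of_lt (hf0 z) hq1
          exact_mod_cast le_of_lt this
        have hqlt1 : q < 1 := by
          have : (q:ℝ) < 1 := lt_of_lt_of_le hq2 (min_le_right _ _)
          exact_mod_cast this
        obtain ⟨t, ht, htq⟩ := exists_lt_of_csInf_lt (hTne z) hq1
        rcases ht with h | ⟨p, hp0, hp1, hzp, rfl⟩
        · exfalso
          rw [h] at htq
          have : (q:ℝ) < 1 := lt_of_lt_of_le hq2 (min_le_right _ _)
          linarith
        · have hpq : p < q := by exact_mod_cast htq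
          have hzUq : z ∈ UF q := (key2 p q hp0 hp1 hq0 hqlt1 hpq).1 (subset_closure hzp)
          refine Filter.eventually_of_mem (((key q hq0 hqlt1).1).mem_nhds hzUq) ?_
          intro w hw
          have := hfle w q hq0 hqlt1 hw
          have hq2' : (q:ℝ) < f z + ε := lt_of_lt_of_le hq2 (min_le_left _ _)
          linarith
    have hlower : ∀ᶠ w in 𝓝 z, f z - ε < f w := by
      by_cases hc : f z - ε < 0
      · exact Filter.Eventually.of_forall (fun w => lt_of_lt_of_le hc (hf0 w))
      · push_neg at hc
        have hfzpos : 0 < f z := by linarith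
        obtain ⟨q₁, hq₁1, hq₁2⟩ := exists_rat_btwn
          (max_lt (by linarith : f z - ε < f z) hfzpos)
        obtain ⟨q₂, hq₂1, hq₂2⟩ := exists_rat_btwn hq₁2
        have hq₁0 : (0:ℚ) ≤ q₁ := by
          have : (0:ℝ) ≤ (q₁:ℝ) := le_of_lt (lt_of_le_of_lt (le_max_right _ _) hq₁1)
          exact_mod_cast this
        have hq₂0 : (0:ℚ) ≤ q₂ := by
          have : (0:ℝ) ≤ (q₂:ℝ) := le_trans (by exact_mod_cast hq₁0) (le_of_lt hq₂1)
          exact_mod_cast this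
        have hq₂1' : q₂ < 1 := by
          have : (q₂:ℝ) < 1 := lt_of_lt_of_le hq₂2 (hf1 z)
          exact_mod_cast this
        have hq₁₂ : q₁ < q₂ := by exact_mod_cast hq₂1
        have hq₁1' : q₁ < 1 := lt_trans hq₁₂ hq₂1'
        have hznotq₂ : z ∉ UF q₂ := by
          intro h
          have := hfle z q₂ hq₂0 hq₂1' h
          linarith
        have hznotcl : z ∉ closure (UF q₁) := by
          intro h
          exact hznotq₂ ((key2 q₁ q₂ hq₁0 hq₁1' hq₂0 hq₂1' hq₁₂).1 h)
        have hopen : IsOpen (closure (UF q₁))ᶜ := isClosed_closure.isOpen_compl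
        refine Filter.eventually_of_mem (hopen.mem_nhds hznotcl) ?_
        intro w hw
        have hwnot : w ∉ UF q₁ := fun h => hw (subset_closure h)
        have := hfge w q₁ hq₁0 hq₁1' hwnot
        have : f z - ε < (q₁:ℝ) := lt_of_le_of_lt (le_max_left _ _) hq₁1
        linarith [hfge w q₁ hq₁0 hq₁1' hwnot]
    filter_upwards [hupper, hlower] with w h1 h2
    rw [Real.dist_eq, abs_sub_lt_iff]
    constructor <;> linarith
  · -- Lipschitz
    have hkey3 : ∀ a b : X, f a - f b ≤ (1/r) * d a b := by
      intro a b
      rcases le_or_gt (f a) (f b) with h | h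
      · have : 0 ≤ (1/r) * d a b := mul_nonneg (by positivity) (hnonneg a b)
        linarith
      · have hdlam : lam * (f a - f b) ≤ d a b := by
          refine le_of_forall_pos_le_add ?_
          intro ε' hε'
          set δ := ε' / (2 * lam) with hδdef
          have hδ : 0 < δ := by positivity
          have hδε : lam * (2 * δ) = ε' := by
            rw [hδdef]; field_simp
          rcases le_or_gt (f a - f b) (2*δ) with hsmall | hbig
          · nlinarith [hnonneg a b]
          · obtain ⟨q', hq'1, hq'2⟩ := exists_rat_btwn (show f a - δ < f a by linarith)
            have hfb0 := hf0 b
            have hc : f b < min (f b + δ) ((q':ℝ)) := lt_min (by linarith) (by linarith)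
            obtain ⟨t, ht, htlt⟩ := exists_lt_of_csInf_lt (hTne b) hc
            rcases ht with h1 | ⟨q, hq0, hq1, hbq, rfl⟩
            · exfalso
              rw [h1] at htlt
              have h2 : (q':ℝ) < 1 := lt_of_lt_of_le hq'2 (hf1 a)
              have h3 := min_le_right (f b + δ) ((q':ℝ))
              linarith
            · have hq'0 : (0:ℚ) ≤ q' := by
                have : (0:ℝ) < (q':ℝ) := by linarith
                exact_mod_cast le_of_lt this
              have hq'lt1 : q' < 1 := by
                have : (q':ℝ) < 1 := lt_of_lt_of_le hq'2 (hf1 a)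
                exact_mod_cast this
              have hqq' : q < q' := by
                have : (q:ℝ) < (q':ℝ) := lt_of_lt_of_le htlt (min_le_right _ _)
                exact_mod_cast this
              have hanot : a ∉ UF q' := by
                intro hin
                have := hfle a q' hq'0 hq'lt1 hin
                linarith
              have sep := (key2 q q' hq0 hq1 hq'0 hq'lt1 hqq').2 b (subset_closure hbq) a hanot
              have hdsym : d b a = d a b := hsymm b a
              have hqfb : (q:ℝ) < f b + δ := lt_of_lt_of_le htlt (min_le_left _ _)
              rw [hdsym] at sep
              nlinarith
        rw [one_div, inv_mul_eq_div, le_div_iff₀ hr]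
        nlinarith
    intro a b
    rw [abs_sub_le_iff]
    refine ⟨hkey3 a b, ?_⟩
    have := hkey3 b a
    rw [hsymm b a] at this
    exact this
end

section
/- Let X be a compact Hausdorff space with a lower semi-continuous metric d refining the topology. Then every τ-continuous function f : X → ℝ is uniformly continuous with respect to d: for every ε > 0 there is δ > 0 such that d(x,y) < δ implies |f(x) − f(y)| < ε. -/
/-- In a compact Hausdorff space with a lower semi-continuous metric refining the
topology, every continuous real-valued function is uniformly continuous w.r.t. the
metric. -/
theorem stmt_19 {X : Type*} [TopologicalSpace X] [CompactSpace X] [T2Space X]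
    (d : X → X → ℝ)
    (hmet : (∀ x y, d x y = 0 ↔ x = y) ∧ (∀ x y, d x y = d y x) ∧
      ∀ x y z, d x z ≤ d x y + d y z)
    (hlsc : LowerSemicontinuous (fun p : X × X => d p.1 p.2))
    (hrefine : ∀ (U : Set X) (x : X), IsOpen U → x ∈ U →
      ∃ ε > 0, ∀ y : X, d x y < ε → y ∈ U)
    (f : X → ℝ) (hf : Continuous f) :
    ∀ ε > 0, ∃ δ > 0, ∀ x y : X, d x y < δ → |f x - f y| < ε := by
  obtain ⟨heq, hsymm, htri⟩ := hmet
  have hnonneg : ∀ x y, 0 ≤ d x y := by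
    intro x y
    have h0 : d x x = 0 := (heq x x).mpr rfl
    have := htri x y x
    rw [h0, hsymm y x] at this
    linarith
  intro ε hε
  set K : Set (X × X) := {p | ε ≤ |f p.1 - f p.2|} with hK
  have hKclosed : IsClosed K := isClosed_le continuous_const
    ((hf.comp continuous_fst).sub (hf.comp continuous_snd)).abs
  have hKcomp : IsCompact K := hKclosed.isCompact
  have hpos : ∀ p ∈ K, 0 < d p.1 p.2 := by
    intro p hp
    rcases (hnonneg p.1 p.2).lt_or_eq with h | h
    · exact h
    · exfalso
      have : p.1 = p.2 := (heq p.1 p.2).mp h.symm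
      have : |f p.1 - f p.2| = 0 := by rw [this]; simp
      have := hp
      rw [hK] at this
      simp only [Set.mem_setOf_eq] at this
      linarith
  -- cover K by opens where d is large
  have hcover : K ⊆ ⋃ n : ℕ, {p : X × X | 1 / (n + 1 : ℝ) < d p.1 p.2} := by
    intro p hp
    obtain ⟨n, hn⟩ := exists_nat_one_div_lt (hpos p hp)
    exact Set.mem_iUnion.mpr ⟨n, hn⟩
  obtain ⟨t, ht⟩ := hKcomp.elim_finite_subcover
    (fun n : ℕ => {p : X × X | 1 / (n + 1 : ℝ) < d p.1 p.2})
    (fun n => hlsc.isOpen_preimage _) hcover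
  -- take N bigger than all elements of t
  obtain ⟨N, hN⟩ : ∃ N : ℕ, ∀ n ∈ t, n ≤ N := ⟨t.sup id, fun n hn => Finset.le_sup (f := id) hn⟩
  refine ⟨1 / (N + 1 : ℝ), by positivity, fun x y hxy => ?_⟩
  by_contra hcon
  push_neg at hcon
  have hmem : (x, y) ∈ K := hcon
  obtain ⟨n, hn, hn2⟩ := Set.mem_iUnion₂.mp (ht hmem)
  simp only [Set.mem_setOf_eq] at hn2
  have : 1 / (N + 1 : ℝ) ≤ 1 / (n + 1 : ℝ) := by
    apply one_div_le_one_div_of_le (by positivity)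
    exact_mod_cast Nat.succ_le_succ (hN n hn)
  linarith
end
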